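/- arXiv:2503.13628 — 3 statements merged into one kernel-verified Lean document; each statement's English description precedes it below -/
import Mathlib

section
/- There is an absolute constant c > 0 with the following property. Let B, M, t be positive integers with K = 2^t and M ≤ K·B/2. Fix a function v : Fin M → Option (Fin K), and let (r_i)_{i ∈ Fin M} be mutually independent random variables, each uniformly distributed on Fin K. For k ∈ Fin K let X_k = #{ i : v_i = some w and w ⊕ r_i = k }. Then Pr[ ∃ k ∈ Fin K with X_k > 3B/4 ] ≤ K·exp(−c·B); equivalently, with probability at least 1 − K·exp(−c·B), every k ∈ Fin K satisfies X_k ≤ 3B/4. -/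
open MeasureTheory ProbabilityTheory

/-- Bitwise exclusive-or on `Fin (2^t)`, identifying elements with `t`-bit strings. -/
def finXor {t : ℕ} (a b : Fin (2 ^ t)) : Fin (2 ^ t) :=
  ⟨a.val ^^^ b.val, Nat.xor_lt_two_pow a.isLt b.isLt⟩

open Real Finset

/-!
Chernoff bound at `s = log 2`, then a union bound over `k`. For fixed `k`, `X_k` is a sum of
`M` independent indicators of the events `r_i = w_i ⊕ k`, each of probability at most `1/K`,
so `E[2^X_k] ≤ ∏ (1 + 1/K) ≤ exp(M/K) ≤ exp(B/2)` and
`Pr[X_k ≥ 3B/4] ≤ 2^(-3B/4) · exp(B/2) = exp(-c·B)` with `c = (3/4) log 2 - 1/2 > 0`.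
-/

lemma finXor_eq_iff {t : ℕ} (a b k : Fin (2 ^ t)) : finXor a b = k ↔ b = finXor a k := by
  constructor <;> intro h <;> subst h <;> simp [finXor]

lemma setOf_finXor_eq_subsingleton {t : ℕ} (o : Option (Fin (2 ^ t))) (k : Fin (2 ^ t)) :
    {x | ∃ w, o = some w ∧ finXor w x = k}.Subsingleton := by
  rintro x ⟨w, rfl, hx⟩ y ⟨w', hw', hy⟩
  cases Option.some_injective _ hw'
  rw [(finXor_eq_iff _ _ _).1 hx, (finXor_eq_iff _ _ _).1 hy]

lemma exp_mul_indicator_one {Ω : Type*} (A : Set Ω) (s : ℝ) (ω : Ω) :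
    exp (s * A.indicator 1 ω) = 1 + (exp s - 1) * A.indicator 1 ω := by
  by_cases h : ω ∈ A <;> simp [h]

section

variable {Ω : Type*} [MeasurableSpace Ω] {μ : Measure Ω}

lemma measure_preimage_le_of_subsingleton {α : Type*} {X : Ω → α} {p : ENNReal}
    (hX : ∀ x, μ (X ⁻¹' {x}) = p) {S : Set α} (hS : S.Subsingleton) : μ (X ⁻¹' S) ≤ p := by
  rcases hS.eq_empty_or_singleton with rfl | ⟨x, rfl⟩
  · simp
  · exact (hX x).le

lemma ProbabilityTheory.iIndepFun.iIndepSet_preimage {ι : Type*} {β : ι → Type*}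
    [∀ i, MeasurableSpace (β i)] {f : ∀ i, Ω → β i} (h : iIndepFun f μ) {S : ∀ i, Set (β i)}
    (hS : ∀ i, MeasurableSet (S i)) :
    iIndepSet (fun i ↦ f i ⁻¹' S i) μ := by
  rw [iIndepSet_iff_iIndep]
  refine iIndep_of_iIndep_of_le ((iIndepFun_iff_iIndep _ _ _).1 h) fun i ↦ ?_
  exact MeasurableSpace.generateFrom_le fun _ h ↦ (Set.mem_singleton_iff.1 h) ▸ ⟨S i, hS i, rfl⟩

lemma integrable_exp_mul_indicator_one [IsFiniteMeasure μ] {A : Set Ω} (hA : MeasurableSet A)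
    (s : ℝ) : Integrable (fun ω ↦ exp (s * A.indicator 1 ω)) μ := by
  simp_rw [exp_mul_indicator_one]
  exact (integrable_const 1).add (((integrable_const 1).indicator hA).const_mul _)

lemma mgf_indicator_one [IsProbabilityMeasure μ] {A : Set Ω} (hA : MeasurableSet A) (s : ℝ) :
    mgf (A.indicator 1) μ s = 1 + (exp s - 1) * μ.real A := by
  simp_rw [mgf, exp_mul_indicator_one]
  rw [integral_add (integrable_const 1) (((integrable_const 1).indicator hA).const_mul _),
    integral_const_mul, integral_indicator_one hA]
  simp

lemma mgf_indicator_one_le_exp [IsProbabilityMeasure μ] {A : Set Ω} (hA : MeasurableSet A)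
    (s : ℝ) : mgf (A.indicator 1) μ s ≤ exp ((exp s - 1) * μ.real A) := by
  rw [mgf_indicator_one hA]
  linarith [add_one_le_exp ((exp s - 1) * μ.real A)]

theorem measureReal_sum_indicator_ge_le_exp {ι : Type*} [Fintype ι] {A : ι → Set Ω}
    (hA : ∀ i, MeasurableSet (A i)) (h : iIndepSet A μ) {s : ℝ} (hs : 0 ≤ s) (a : ℝ) :
    μ.real {ω | a ≤ ∑ i, (A i).indicator 1 ω} ≤
      exp (-s * a + (exp s - 1) * ∑ i, μ.real (A i)) := by
  have := h.isProbabilityMeasure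
  have hY : iIndepFun (fun i ↦ (A i).indicator (1 : Ω → ℝ)) μ := h.iIndepFun_indicator
  have hmeas i : Measurable ((A i).indicator (1 : Ω → ℝ)) := measurable_const.indicator (hA i)
  have hint := hY.integrable_exp_mul_sum hmeas (t := s) (s := univ)
    fun i _ ↦ integrable_exp_mul_indicator_one (hA i) s
  calc μ.real {ω | a ≤ ∑ i, (A i).indicator 1 ω}
      ≤ exp (-s * a) * mgf (∑ i, (A i).indicator 1) μ s := by
        simpa only [Finset.sum_apply] using measure_ge_le_exp_mul_mgf a hs hint
    _ = exp (-s * a) * ∏ i, mgf ((A i).indicator 1) μ s := by rw [hY.mgf_sum hmeas]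
    _ ≤ exp (-s * a) * ∏ i, exp ((exp s - 1) * μ.real (A i)) := by
        refine mul_le_mul_of_nonneg_left ?_ (exp_nonneg _)
        exact prod_le_prod (fun _ _ ↦ mgf_nonneg)
          fun i _ ↦ mgf_indicator_one_le_exp (μ := μ) (hA i) s
    _ = exp (-s * a + (exp s - 1) * ∑ i, μ.real (A i)) := by
        rw [← exp_sum, ← exp_add, mul_sum]

end

open scoped Classical in
/-- Claim 3.3: with `K = 2^t` and `M ≤ K·B/2`, for any
fixed `v : Fin M → Option (Fin K)` and independent uniform shifts `r_i` on `Fin K`, letting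
`X_k = #{i : v_i = some w ∧ w ⊕ r_i = k}`, we have
`Pr[∃ k, X_k > 3B/4] ≤ K·exp(-c·B)` for an absolute constant `c > 0`. -/
theorem stmt_4 :
    ∃ c : ℝ, 0 < c ∧
      ∀ (B M t : ℕ), 0 < B → 0 < M → 0 < t →
        (M : ℝ) ≤ ((2 ^ t : ℕ) : ℝ) * (B : ℝ) / 2 →
        ∀ v : Fin M → Option (Fin (2 ^ t)),
        ∀ (Ω : Type) (_ : MeasurableSpace Ω) (μ : Measure Ω),
          IsProbabilityMeasure μ →
        ∀ r : Fin M → Ω → Fin (2 ^ t),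
          (∀ i, Measurable (r i)) →
          (∀ i k, μ {ω | r i ω = k} = ((2 ^ t : ℕ) : ENNReal)⁻¹) →
          iIndepFun r μ →
          μ {ω | ∃ k : Fin (2 ^ t), 3 * (B : ℝ) / 4 <
              ((Finset.univ.filter fun i : Fin M =>
                  ∃ w, v i = some w ∧ finXor w (r i ω) = k).card : ℝ)} ≤
            ((2 ^ t : ℕ) : ENNReal) * ENNReal.ofReal (Real.exp (-c * (B : ℝ))) := by
  refine ⟨3 / 4 * log 2 - 1 / 2, by linarith [log_two_gt_d9], ?_⟩
  intro B M t _ _ _ hMK v Ω _ μ _ r hr hunif hindep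
  let S : Fin (2 ^ t) → Fin M → Set (Fin (2 ^ t)) := fun k i ↦
    {x | ∃ w, v i = some w ∧ finXor w x = k}
  have hcard k ω :
      ((univ.filter fun i : Fin M ↦ ∃ w, v i = some w ∧ finXor w (r i ω) = k).card : ℝ) =
        ∑ i, (r i ⁻¹' S k i).indicator 1 ω := by
    rw [Finset.card_filter]
    push_cast
    simp only [Set.indicator_apply, Pi.one_apply, Set.mem_preimage, Set.mem_ofPred_eq, S]
  have hp k i : μ.real (r i ⁻¹' S k i) ≤ ((2 ^ t : ℕ) : ℝ)⁻¹ := by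
    have := measure_preimage_le_of_subsingleton (hunif i) (setOf_finXor_eq_subsingleton (v i) k)
    exact (ENNReal.toReal_mono (by simp) this).trans_eq (by simp)
  have htail k : μ {ω | 3 * (B : ℝ) / 4 ≤ ∑ i, (r i ⁻¹' S k i).indicator 1 ω} ≤
      ENNReal.ofReal (exp (-(3 / 4 * log 2 - 1 / 2) * B)) := by
    have hsum : ∑ i, μ.real (r i ⁻¹' S k i) ≤ B / 2 :=
      calc ∑ i, μ.real (r i ⁻¹' S k i) ≤ M * ((2 ^ t : ℕ) : ℝ)⁻¹ :=
            (sum_le_sum fun i _ ↦ hp k i).trans_eq (by simp)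
        _ ≤ B / 2 := by
            rw [← div_eq_mul_inv, div_le_iff₀ (by positivity)]
            linarith
    rw [← ofReal_measureReal]
    refine ENNReal.ofReal_le_ofReal ((measureReal_sum_indicator_ge_le_exp (fun i ↦ hr i trivial)
      (hindep.iIndepSet_preimage fun _ ↦ trivial) (log_nonneg one_le_two) _).trans ?_)
    rw [exp_log two_pos, exp_le_exp]
    linarith
  calc _ ≤ μ (⋃ k, {ω | 3 * (B : ℝ) / 4 ≤ ∑ i, (r i ⁻¹' S k i).indicator 1 ω}) :=
        measure_mono <| by
          rintro ω ⟨k, hk⟩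
          exact Set.mem_iUnion.2 ⟨k, (hcard k ω ▸ hk).le⟩
    _ ≤ ∑ k, μ {ω | 3 * (B : ℝ) / 4 ≤ ∑ i, (r i ⁻¹' S k i).indicator 1 ω} :=
        measure_iUnion_fintype_le _ _
    _ ≤ ∑ _k : Fin (2 ^ t), ENNReal.ofReal (exp (-(3 / 4 * log 2 - 1 / 2) * B)) :=
        sum_le_sum fun k _ ↦ htail k
    _ = _ := by simp
end

section
/- Let t and N be positive integers and let X₁, …, X_t be mutually independent real-valued random variables with 0 ≤ X_i ≤ 100 and E[X_i] ≥ 25 for every i. Then Pr[ there exists j with N ≤ j ≤ t such that ∑_{i=t−j+1}^{t} X_i ≤ j ] ≤ 11·exp(−N/10). -/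
/-!
For a fixed window of the last `j` variables, the sum has mean at least `25 j`, so the event
`∑ X_i ≤ j` is a deviation of at least `24 j` below the mean. Hoeffding's inequality bounds its
probability by `exp (-2 j 24² / 100²) ≤ exp (-j / 10)`. A union bound over `N ≤ j ≤ t` and the
geometric series `∑_{j ≥ N} e^{-j/10} ≤ e^{-N/10} / (1 - e^{-1/10}) ≤ 11 e^{-N/10}` finish.
-/

open MeasureTheory ProbabilityTheory Finset Real

theorem Fin.card_filter_sub_le_val {n j : ℕ} (hj : j ≤ n) :
    #{i : Fin n | n - j ≤ (i : ℕ)} = j := by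
  have h := card_filter_add_card_filter_not (s := (univ : Finset (Fin n)))
    (p := fun i : Fin n => (i : ℕ) < n - j)
  simp only [card_filter_val_lt, not_lt, card_univ, Fintype.card_fin] at h
  omega

theorem sum_Icc_exp_neg_div_ten_le (N t : ℕ) :
    ∑ j ∈ Icc N t, exp (-j / 10) ≤ 11 * exp (-N / 10) := by
  have hx : exp (-1 / 10) ≤ 10 / 11 := by
    rw [show (-1 / 10 : ℝ) = -(1 / 10) by ring, exp_neg, inv_le_comm₀ (exp_pos _) (by norm_num)]
    linarith [add_one_le_exp (1 / 10 : ℝ)]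
  set x := exp (-1 / 10)
  have h_pow (j : ℕ) : exp (-j / 10) = x ^ j := by
    rw [← exp_nat_mul]; ring_nf
  simp only [h_pow, ← Ico_add_one_right_eq_Icc]
  calc ∑ j ∈ Ico N (t + 1), x ^ j ≤ x ^ N / (1 - x) :=
        geom_sum_Ico_le_of_lt_one (exp_pos _).le (by linarith)
    _ ≤ 11 * x ^ N := by
        have : 0 ≤ x ^ N := by positivity
        rw [div_le_iff₀ (by linarith)]
        nlinarith

namespace ProbabilityTheory

variable {Ω ι : Type*} {m : MeasurableSpace Ω} {μ : Measure Ω} [IsProbabilityMeasure μ]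
  {X : ι → Ω → ℝ} {s : Finset ι}

theorem measureReal_sum_le_sum_integral_sub_le {a b t : ℝ} (h_indep : iIndepFun X μ)
    (h_meas : ∀ i, AEMeasurable (X i) μ) (hX : ∀ i, ∀ᵐ ω ∂μ, X i ω ∈ Set.Icc a b)
    (ht : 0 ≤ t) :
    μ.real {ω | ∑ i ∈ s, X i ω ≤ ∑ i ∈ s, μ[X i] - #s * t} ≤
      exp (-2 * #s * t ^ 2 / (b - a) ^ 2) := by
  have h_indep' : iIndepFun (fun i ω => -(X i ω - μ[X i])) μ :=
    h_indep.comp (fun i (x : ℝ) => -(x - ∫ ω, X i ω ∂μ)) fun i => by fun_prop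
  have hoeffding := HasSubgaussianMGF.measure_sum_ge_le_of_iIndepFun h_indep' (s := s)
    (fun i _ => (hasSubgaussianMGF_of_mem_Icc (h_meas i) (hX i)).neg)
    (mul_nonneg (Nat.cast_nonneg #s) ht)
  convert hoeffding using 2
  · ext ω
    simp only [Set.mem_ofPred_eq, sum_neg_distrib, sum_sub_distrib]
    constructor <;> intro h <;> linarith
  · rcases (#s).eq_zero_or_pos with hs | hs
    · simp [hs]
    · simp only [sum_const, nsmul_eq_mul, NNReal.coe_mul, NNReal.coe_natCast, NNReal.coe_pow,
        NNReal.coe_div, coe_nnnorm, Real.norm_eq_abs, NNReal.coe_ofNat, div_pow, sq_abs]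
      field_simp

theorem measureReal_sum_le_card_le (h_indep : iIndepFun X μ) (h_meas : ∀ i, Measurable (X i))
    (hX : ∀ i ω, 0 ≤ X i ω ∧ X i ω ≤ 100) (h_mean : ∀ i, 25 ≤ μ[X i]) :
    μ.real {ω | ∑ i ∈ s, X i ω ≤ #s} ≤ exp (-#s / 10) := by
  have h_sum_mean : (25 : ℝ) * #s ≤ ∑ i ∈ s, μ[X i] := by
    rw [mul_comm, ← nsmul_eq_mul]
    exact card_nsmul_le_sum s (fun i => μ[X i]) 25 fun i _ => h_mean i
  calc μ.real {ω | ∑ i ∈ s, X i ω ≤ #s}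
      ≤ μ.real {ω | ∑ i ∈ s, X i ω ≤ ∑ i ∈ s, μ[X i] - #s * 24} := by
        refine measureReal_mono fun ω hω => ?_
        simp only [Set.mem_ofPred_eq] at hω ⊢
        linarith
    _ ≤ exp (-2 * #s * 24 ^ 2 / (100 - 0) ^ 2) :=
        measureReal_sum_le_sum_integral_sub_le h_indep (fun i => (h_meas i).aemeasurable)
          (fun i => ae_of_all _ fun ω => hX i ω) (by norm_num)
    _ ≤ exp (-#s / 10) := by
        rw [exp_le_exp]
        linarith [(Nat.cast_nonneg #s : (0 : ℝ) ≤ #s)]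

end ProbabilityTheory

open scoped Classical in
/-- probabilistic core of Claim 4.5: if `X₁, …, X_t` are mutually
independent random variables with `0 ≤ X_i ≤ 100` and `E[X_i] ≥ 25`, then the probability
that some `j` with `N ≤ j ≤ t` satisfies `∑_{i = t-j+1}^{t} X_i ≤ j` is at most
`11 exp(-N/10)`. (Here `X : Fin t → Ω → ℝ` is 0-indexed, so the last `j` variables are
those with index `≥ t - j`.) -/
theorem stmt_10 (t N : ℕ)
    (Ω : Type) (_ : MeasurableSpace Ω) (μ : Measure Ω) [IsProbabilityMeasure μ]
    (X : Fin t → Ω → ℝ)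
    (hmeas : ∀ i, Measurable (X i))
    (hbound : ∀ i ω, 0 ≤ X i ω ∧ X i ω ≤ 100)
    (hmean : ∀ i, 25 ≤ ∫ ω, X i ω ∂μ)
    (hindep : iIndepFun X μ) :
    μ {ω | ∃ j : ℕ, N ≤ j ∧ j ≤ t ∧
        (∑ i ∈ Finset.univ.filter fun i : Fin t => t - j ≤ (i : ℕ), X i ω) ≤ (j : ℝ)} ≤
      ENNReal.ofReal (11 * Real.exp (-(N : ℝ) / 10)) := by
  let F (j : ℕ) : Finset (Fin t) := univ.filter fun i => t - j ≤ (i : ℕ)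
  let A (j : ℕ) : Set Ω := {ω | ∑ i ∈ F j, X i ω ≤ j}
  have h_union : {ω | ∃ j : ℕ, N ≤ j ∧ j ≤ t ∧ ∑ i ∈ F j, X i ω ≤ j} = ⋃ j ∈ Icc N t, A j := by
    ext ω
    simp [A, and_assoc]
  have h_tail (j : ℕ) (hj : j ∈ Icc N t) : μ.real (A j) ≤ exp (-j / 10) := by
    have h_card : #(F j) = j := Fin.card_filter_sub_le_val (mem_Icc.mp hj).2
    simpa only [h_card] using measureReal_sum_le_card_le (s := F j) hindep hmeas hbound hmean
  rw [ENNReal.le_ofReal_iff_toReal_le (measure_ne_top μ _) (by positivity), h_union]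
  calc μ.real (⋃ j ∈ Icc N t, A j) ≤ ∑ j ∈ Icc N t, μ.real (A j) :=
        measureReal_biUnion_finset_le _ _
    _ ≤ ∑ j ∈ Icc N t, exp (-j / 10) := sum_le_sum h_tail
    _ ≤ 11 * exp (-N / 10) := sum_Icc_exp_neg_div_ten_le N t
end

section
/- For every δ ∈ (0, 0.1) and every sufficiently large integer c (how large depending only on δ), there exists N₀ (depending on δ and c) such that the following holds for all n ≥ N₀. Let n′ ≤ n and let M, B be positive integers with n^δ/2 ≤ B ≤ 2·n^δ and n′/M ≥ B + n^δ/(log₂ n)^{11}. If (h_i)_{i=1}^{n′} is a c-wise independent family of random variables, each uniformly distributed on Fin M = {0, …, M−1}, then Pr[ ∃ k ∈ Fin M with #{ i : h_i = k } ≤ B ] ≤ n^{1 − δc/3}; that is, with high probability in n every bin k has at least B + 1 keys hashing to it. -/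
open MeasureTheory ProbabilityTheory

/-- A family `(X_i)_{i ∈ ι}` of random variables is `c`-wise independent if for every
subset `S ⊆ ι` with `|S| ≤ c`, the subfamily `(X_i)_{i ∈ S}` is mutually independent. -/
def CWiseIndep {Ω : Type*} {ι : Type*} {β : Type*} [MeasurableSpace Ω] [MeasurableSpace β]
    (c : ℕ) (X : ι → Ω → β) (μ : Measure Ω) : Prop :=
  ∀ S : Finset ι, S.card ≤ c →
    iIndepFun (fun i : S => X i.val) μ

/-!
Fix a bin `k` and put `Y i = 1/M - 𝟙[h i = k]`, so that `n'/M - #{i | h i = k} = ∑ i, Y i`.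
Expanding the `2q`-th moment with `2q ≤ c`, each term `∏ j, Y (g j)` involves at most `c`
indices, so by `c`-wise independence its mean is `∏ i, 𝔼[Y i ^ mᵢ]` over the distinct indices,
with multiplicities `mᵢ`. This vanishes when some index occurs once and is at most
`(1/M) ^ #distinct` otherwise; counting the surviving `g` gives
`𝔼[(∑ Y)^{2q}] ≤ (q+1) q^{2q} (n'/M)^q`. Markov's inequality bounds the probability that
bin `k` gets at most `B` keys by `(q+1) q^{2q} ((n'/M) / (n'/M - B)^2)^q`, which is at most
`(q+1) q^{2q} (4 log₂^{22} n / n^δ)^q`; the union bound over `M ≤ n` bins costs a factor `n`,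
and `q = ⌊c/2⌋ ≥ 5c/12` absorbs the polylogarithmic factor into `n^{1 - δc/3}`.
-/

open Finset Filter

section CWiseIndep

variable {Ω ι β γ : Type*} [MeasurableSpace Ω] [MeasurableSpace β] [MeasurableSpace γ]
  {μ : Measure Ω} {c : ℕ}

lemma CWiseIndep.comp {X : ι → Ω → β} (hX : CWiseIndep c X μ) (φ : ι → β → γ)
    (hφ : ∀ i, Measurable (φ i)) : CWiseIndep c (fun i => φ i ∘ X i) μ :=
  fun S hS => (hX S hS).comp (fun i => φ i) fun i => hφ i

lemma CWiseIndep.integral_prod_eq_prod_integral {Y : ι → Ω → ℝ} (hY : CWiseIndep c Y μ)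
    (hmeas : ∀ i, AEStronglyMeasurable (Y i) μ) {S : Finset ι} (hS : #S ≤ c) :
    ∫ ω, ∏ i ∈ S, Y i ω ∂μ = ∏ i ∈ S, ∫ ω, Y i ω ∂μ := by
  simp_rw [← prod_coe_sort S]
  exact (hY S hS).integral_fun_prod_eq_prod_integral fun i => hmeas i

end CWiseIndep

section Combinatorics

variable {ι : Type*} {m q : ℕ} {p : ℝ}

lemma two_mul_card_image_le [DecidableEq ι] {g : Fin m → ι}
    (hg : ∀ i ∈ univ.image g, 2 ≤ #{j | g j = i}) :
    2 * #(univ.image g) ≤ m :=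
  calc 2 * #(univ.image g) = ∑ _i ∈ univ.image g, 2 := by rw [sum_const, smul_eq_mul, mul_comm]
    _ ≤ ∑ i ∈ univ.image g, #{j | g j = i} := sum_le_sum hg
    _ = m := by rw [← card_eq_sum_card_image, card_univ, Fintype.card_fin]

lemma card_filter_image_eq_le [Fintype ι] [DecidableEq ι] (S : Finset ι) :
    #{g : Fin m → ι | univ.image g = S} ≤ #S ^ m := by
  calc #{g : Fin m → ι | univ.image g = S} ≤ #(Fintype.piFinset fun _ : Fin m => S) := by
        refine card_le_card fun g hg => Fintype.mem_piFinset.mpr fun j => ?_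
        rw [← (mem_filter.mp hg).2]
        exact mem_image_of_mem g (mem_univ j)
    _ = #S ^ m := by simp

lemma sum_pow_card_le [Fintype ι] (hp : 0 ≤ p) (hnp : 1 ≤ Fintype.card ι * p) :
    ∑ S : Finset ι with #S ≤ q, p ^ #S ≤ (q + 1) * (Fintype.card ι * p) ^ q := by
  set n := Fintype.card ι
  calc ∑ S : Finset ι with #S ≤ q, p ^ #S
      = ∑ S ∈ (univ : Finset ι).powerset, if #S ≤ q then p ^ #S else 0 := by
        rw [sum_filter, powerset_univ]
    _ = ∑ j ∈ range (n + 1), n.choose j • if j ≤ q then p ^ j else 0 := by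
        rw [sum_powerset_apply_card (fun j => if j ≤ q then p ^ j else 0), card_univ]
    _ ≤ ∑ j ∈ range (n + 1), if j ≤ q then (n * p) ^ q else 0 := by
        refine sum_le_sum fun j _ => ?_
        split_ifs with hj
        · calc n.choose j • p ^ j ≤ (n : ℝ) ^ j * p ^ j := by
                rw [nsmul_eq_mul]; gcongr; exact_mod_cast Nat.choose_le_pow n j
            _ = (n * p) ^ j := (mul_pow _ _ _).symm
            _ ≤ (n * p) ^ q := pow_le_pow_right₀ hnp hj
        · simp
    _ = #{j ∈ range (n + 1) | j ≤ q} * (n * p) ^ q := by rw [← sum_filter, sum_const, nsmul_eq_mul]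
    _ ≤ (q + 1) * (n * p) ^ q := by
        gcongr
        calc (#{j ∈ range (n + 1) | j ≤ q} : ℝ) ≤ #(range (q + 1)) := by
              exact_mod_cast card_le_card fun j hj => by simp at hj ⊢; omega
          _ = q + 1 := by simp

lemma sum_pow_card_image_le [Fintype ι] [DecidableEq ι] (hp : 0 ≤ p)
    (hnp : 1 ≤ Fintype.card ι * p) :
    ∑ g : Fin (2 * q) → ι with ∀ i ∈ univ.image g, 2 ≤ #{j | g j = i}, p ^ #(univ.image g)
      ≤ (q + 1) * q ^ (2 * q) * (Fintype.card ι * p) ^ q := by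
  set A : Finset (Fin (2 * q) → ι) := {g | ∀ i ∈ univ.image g, 2 ≤ #{j | g j = i}}
  have hmaps : ∀ g ∈ A, univ.image g ∈ ({S : Finset ι | #S ≤ q} : Finset (Finset ι)) := by
    intro g hg
    have := two_mul_card_image_le (mem_filter.mp hg).2
    simp only [mem_filter, mem_univ, true_and]
    omega
  calc ∑ g ∈ A, p ^ #(univ.image g)
      = ∑ S : Finset ι with #S ≤ q, ∑ g ∈ A with univ.image g = S, p ^ #S := by
        rw [← sum_fiberwise_of_maps_to hmaps]
        refine sum_congr rfl fun S _ => sum_congr rfl fun g hg => ?_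
        rw [(mem_filter.mp hg).2]
    _ ≤ ∑ S : Finset ι with #S ≤ q, q ^ (2 * q) * p ^ #S := by
        refine sum_le_sum fun S hS => ?_
        rw [sum_const, nsmul_eq_mul]
        gcongr
        calc (#{g ∈ A | univ.image g = S} : ℝ) ≤ #{g : Fin (2 * q) → ι | univ.image g = S} := by
              exact_mod_cast card_le_card (filter_subset_filter _ (filter_subset _ _))
          _ ≤ #S ^ (2 * q) := by exact_mod_cast card_filter_image_eq_le S
          _ ≤ q ^ (2 * q) := by gcongr; exact_mod_cast (mem_filter.mp hS).2
    _ ≤ (q + 1) * q ^ (2 * q) * (Fintype.card ι * p) ^ q := by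
        rw [← mul_sum, mul_comm ((q : ℝ) + 1), mul_assoc]
        gcongr
        exact sum_pow_card_le hp hnp

lemma sum_prod_pow_card_fiber_le [Fintype ι] [DecidableEq ι] {a : ι → ℕ → ℝ} (ha₁ : ∀ i, a i 1 = 0)
    (ha : ∀ i r, 2 ≤ r → |a i r| ≤ p) (hp : 0 ≤ p) (hnp : 1 ≤ Fintype.card ι * p) :
    ∑ g : Fin (2 * q) → ι, ∏ i ∈ univ.image g, a i #{j | g j = i}
      ≤ (q + 1) * q ^ (2 * q) * (Fintype.card ι * p) ^ q := by
  refine le_trans ?_ (sum_pow_card_image_le hp hnp)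
  rw [sum_filter]
  refine sum_le_sum fun g _ => ?_
  split_ifs with hg
  · calc ∏ i ∈ univ.image g, a i #{j | g j = i} ≤ ∏ i ∈ univ.image g, |a i #{j | g j = i}| :=
          (le_abs_self _).trans_eq (abs_prod _ _)
      _ ≤ ∏ _i ∈ univ.image g, p :=
        prod_le_prod (fun _ _ => abs_nonneg _) fun i hi => ha i _ (hg i hi)
      _ = p ^ #(univ.image g) := prod_const p
  · push Not at hg
    obtain ⟨i, hi, hlt⟩ := hg
    have hpos : 0 < #{j | g j = i} := by
      obtain ⟨j, -, rfl⟩ := mem_image.mp hi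
      exact card_pos.mpr ⟨j, by simp⟩
    rw [prod_eq_zero hi (by rw [show #{j | g j = i} = 1 by omega, ha₁])]

end Combinatorics

section Moments

variable {Ω ι : Type*} [MeasurableSpace Ω] {μ : Measure Ω} [IsProbabilityMeasure μ]

lemma integrable_of_abs_le_one {Y : Ω → ℝ} (hY : Measurable Y) (hbdd : ∀ ω, |Y ω| ≤ 1) :
    Integrable Y μ :=
  .of_bound hY.aestronglyMeasurable 1 (ae_of_all _ hbdd)

lemma abs_integral_pow_le_integral_sq {Y : Ω → ℝ} (hY : Measurable Y) (hbdd : ∀ ω, |Y ω| ≤ 1)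
    {r : ℕ} (hr : 2 ≤ r) : |∫ ω, Y ω ^ r ∂μ| ≤ ∫ ω, Y ω ^ 2 ∂μ := by
  have hsq : Integrable (fun ω => Y ω ^ 2) μ := integrable_of_abs_le_one (hY.pow_const 2)
    fun ω => by rw [abs_pow]; exact pow_le_one₀ (abs_nonneg _) (hbdd ω)
  calc |∫ ω, Y ω ^ r ∂μ| ≤ ∫ ω, |Y ω ^ r| ∂μ := abs_integral_le_integral_abs
    _ ≤ ∫ ω, Y ω ^ 2 ∂μ := integral_mono_of_nonneg (ae_of_all _ fun _ => abs_nonneg _) hsq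
        (ae_of_all _ fun ω => show |Y ω ^ r| ≤ Y ω ^ 2 by
          rw [abs_pow, ← sq_abs]; exact pow_le_pow_of_le_one (abs_nonneg _) (hbdd ω) hr)

variable [Fintype ι] [DecidableEq ι] {c q : ℕ} {p : ℝ} {Y : ι → Ω → ℝ}

lemma CWiseIndep.integral_sum_pow_eq (hY : CWiseIndep c Y μ) (hmeas : ∀ i, Measurable (Y i))
    (hbdd : ∀ i ω, |Y i ω| ≤ 1) {m : ℕ} (hm : m ≤ c) :
    ∫ ω, (∑ i, Y i ω) ^ m ∂μ
      = ∑ g : Fin m → ι, ∏ i ∈ univ.image g, ∫ ω, Y i ω ^ #{j | g j = i} ∂μ := by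
  have hint : ∀ g : Fin m → ι, Integrable (fun ω => ∏ j, Y (g j) ω) μ := fun g =>
    integrable_of_abs_le_one (Finset.measurable_prod _ fun j _ => hmeas (g j)) fun ω =>
      (abs_prod _ _).trans_le (prod_le_one (fun _ _ => abs_nonneg _) fun j _ => hbdd (g j) ω)
  simp_rw [Fintype.sum_pow]
  rw [integral_finsetSum _ fun g _ => hint g]
  refine sum_congr rfl fun g _ => ?_
  have hfib : ∀ ω, ∏ j, Y (g j) ω = ∏ i ∈ univ.image g, Y i ω ^ #{j | g j = i} :=
    fun ω => prod_comp (fun i => Y i ω) g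
  simp_rw [hfib]
  have hS : #(univ.image g) ≤ c := card_image_le.trans (by simpa using hm)
  exact (hY.comp (fun i y => y ^ #{j | g j = i}) fun i => measurable_id.pow_const _)
    |>.integral_prod_eq_prod_integral (fun i => ((hmeas i).pow_const _).aestronglyMeasurable) hS

theorem CWiseIndep.integral_sum_pow_le (hY : CWiseIndep c Y μ) (hmeas : ∀ i, Measurable (Y i))
    (hbdd : ∀ i ω, |Y i ω| ≤ 1) (hmean : ∀ i, ∫ ω, Y i ω ∂μ = 0)
    (hvar : ∀ i, ∫ ω, Y i ω ^ 2 ∂μ ≤ p) (hq : 2 * q ≤ c) (hnp : 1 ≤ Fintype.card ι * p) :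
    ∫ ω, (∑ i, Y i ω) ^ (2 * q) ∂μ ≤ (q + 1) * q ^ (2 * q) * (Fintype.card ι * p) ^ q := by
  have hp : 0 ≤ p := (pos_of_mul_pos_right (by linarith) (Nat.cast_nonneg _)).le
  rw [hY.integral_sum_pow_eq hmeas hbdd hq]
  exact sum_prod_pow_card_fiber_le (fun i => by simpa using hmean i)
    (fun i r hr => (abs_integral_pow_le_integral_sq (hmeas i) (hbdd i) hr).trans (hvar i)) hp hnp

end Moments

section Indicator

variable {Ω : Type*} [MeasurableSpace Ω] {μ : Measure Ω} [IsProbabilityMeasure μ] {A : Set Ω}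
  {p : ℝ}

lemma integral_sub_indicator_eq_zero (hA : MeasurableSet A) (hp : μ.real A = p) :
    ∫ ω, (p - A.indicator 1 ω) ∂μ = 0 := by
  have hI : Integrable (A.indicator (1 : Ω → ℝ)) μ := (integrable_const 1).indicator hA
  rw [integral_sub (integrable_const p) hI, integral_indicator_one hA, hp]
  simp

lemma integral_sub_indicator_sq_le (hA : MeasurableSet A) (hp : μ.real A = p) :
    ∫ ω, (p - A.indicator 1 ω) ^ 2 ∂μ ≤ p := by
  have hI : Integrable (A.indicator (1 : Ω → ℝ)) μ := (integrable_const 1).indicator hA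
  have hsq : ∀ ω, (p - A.indicator 1 ω) ^ 2 = p ^ 2 + (1 - 2 * p) * A.indicator 1 ω := fun ω => by
    by_cases hω : ω ∈ A <;> simp [hω]; ring
  simp_rw [hsq]
  rw [integral_add (integrable_const _) (hI.const_mul _), integral_const_mul,
    integral_indicator_one hA, hp]
  simp only [integral_const, probReal_univ, one_smul]
  nlinarith [sq_nonneg p]

end Indicator

lemma measure_le_le_ofReal_integral_pow_div {Ω : Type*} [MeasurableSpace Ω] {μ : Measure Ω}
    [IsFiniteMeasure μ] {X : Ω → ℝ} {m b : ℝ} {r : ℕ} (hr : Even r)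
    (hint : Integrable (fun ω => (m - X ω) ^ r) μ) (hb : b < m) :
    μ {ω | X ω ≤ b} ≤ ENNReal.ofReal ((∫ ω, (m - X ω) ^ r ∂μ) / (m - b) ^ r) := by
  have hmarkov := mul_meas_ge_le_integral_of_nonneg
    (ae_of_all _ fun ω => hr.pow_nonneg (m - X ω)) hint ((m - b) ^ r)
  calc μ {ω | X ω ≤ b} ≤ μ {ω | (m - b) ^ r ≤ (m - X ω) ^ r} :=
        measure_mono fun ω (hω : X ω ≤ b) =>
          pow_le_pow_left₀ (sub_pos.mpr hb).le (by linarith) r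
    _ = ENNReal.ofReal (μ.real {ω | (m - b) ^ r ≤ (m - X ω) ^ r}) := (ofReal_measureReal).symm
    _ ≤ _ := ENNReal.ofReal_le_ofReal ((le_div_iff₀' (pow_pos (sub_pos.mpr hb) r)).mpr hmarkov)

section Bins

variable {Ω : Type*} [MeasurableSpace Ω] {μ : Measure Ω} [IsProbabilityMeasure μ] {n M c q : ℕ}
  {h : Fin n → Ω → Fin M} {k : Fin M}

lemma integral_sub_card_filter_pow_le (hmeas : ∀ i, Measurable (h i))
    (hunif : ∀ i, μ {ω | h i ω = k} = (M : ENNReal)⁻¹) (hindep : CWiseIndep c h μ)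
    (hq : 2 * q ≤ c) (hload : 1 ≤ (n : ℝ) / M) :
    ∫ ω, ((n : ℝ) / M - #{i | h i ω = k}) ^ (2 * q) ∂μ
      ≤ (q + 1) * q ^ (2 * q) * ((n : ℝ) / M) ^ q := by
  set p : ℝ := (M : ℝ)⁻¹
  have hp₁ : p ≤ 1 := inv_le_one_of_one_le₀ (by exact_mod_cast k.pos)
  have hA : ∀ i, MeasurableSet (h i ⁻¹' {k}) := fun i => hmeas i (measurableSet_singleton k)
  have hp : ∀ i, μ.real (h i ⁻¹' {k}) = p := fun i => by
    simp [measureReal_def, Set.preimage, hunif i, p]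
  set Y : Fin n → Ω → ℝ := fun i ω => p - (h i ⁻¹' {k}).indicator 1 ω
  have hY : CWiseIndep c Y μ :=
    hindep.comp (fun _ y => p - ({k} : Set (Fin M)).indicator 1 y) fun _ => .of_discrete
  have hbdd : ∀ i ω, |Y i ω| ≤ 1 := fun i ω => by
    have : 0 ≤ p := by positivity
    by_cases hω : h i ω = k <;> simp [Y, hω, abs_le] <;> constructor <;> linarith
  have hsum : ∀ ω, (n : ℝ) / M - #{i | h i ω = k} = ∑ i, Y i ω := fun ω => by
    simp only [Y, sum_sub_distrib, sum_const, card_univ, Fintype.card_fin, nsmul_eq_mul,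
      natCast_card_filter, div_eq_mul_inv]
    refine congrArg _ (sum_congr rfl fun i _ => ?_)
    by_cases hω : h i ω = k <;> simp [hω]
  simp_rw [hsum]
  have hnp : 1 ≤ (Fintype.card (Fin n) : ℝ) * p := by rwa [Fintype.card_fin, ← div_eq_mul_inv]
  simpa [p, div_eq_mul_inv] using hY.integral_sum_pow_le
    (fun i => measurable_const.sub (measurable_const.indicator (hA i))) hbdd
    (fun i => integral_sub_indicator_eq_zero (hA i) (hp i))
    (fun i => integral_sub_indicator_sq_le (hA i) (hp i)) hq hnp

lemma measure_card_filter_le_le (hmeas : ∀ i, Measurable (h i))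
    (hunif : ∀ i, μ {ω | h i ω = k} = (M : ENNReal)⁻¹) (hindep : CWiseIndep c h μ)
    (hq : 2 * q ≤ c) (hload : 1 ≤ (n : ℝ) / M) {B : ℝ} (hB : B < n / M) :
    μ {ω | (#{i | h i ω = k} : ℝ) ≤ B}
      ≤ ENNReal.ofReal
          ((q + 1) * q ^ (2 * q) * ((n : ℝ) / M) ^ q / ((n : ℝ) / M - B) ^ (2 * q)) := by
  have hcard : Measurable fun ω => (#{i | h i ω = k} : ℝ) :=
    (Measurable.of_discrete (f := fun x : Fin n → Fin M => (#{i | x i = k} : ℝ))).comp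
      (measurable_pi_lambda _ hmeas)
  have hcard_le : ∀ ω, (#{i | h i ω = k} : ℝ) ≤ n := fun ω => by
    exact_mod_cast (card_filter_le _ _).trans_eq (card_fin n)
  have hint : Integrable (fun ω => ((n : ℝ) / M - #{i | h i ω = k}) ^ (2 * q)) μ :=
    .of_bound ((measurable_const.sub hcard).pow_const _).aestronglyMeasurable
      (((n : ℝ) / M + n) ^ (2 * q)) (ae_of_all _ fun ω => by
        rw [Real.norm_eq_abs, abs_pow]
        gcongr
        have : (0 : ℝ) ≤ #{i | h i ω = k} := by positivity
        rw [abs_le]; constructor <;> linarith [hcard_le ω])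
  refine (measure_le_le_ofReal_integral_pow_div (even_two_mul q) hint hB).trans
    (ENNReal.ofReal_le_ofReal ?_)
  gcongr
  exact integral_sub_card_filter_pow_le hmeas hunif hindep hq hload

end Bins

lemma div_sq_sub_le {E B u L : ℝ} (hu : 0 < u) (hL : 1 ≤ L) (hBu : B ≤ 2 * u)
    (hE : B + u / L ^ 11 ≤ E) : E / (E - B) ^ 2 ≤ 4 * L ^ 22 / u := by
  have hgap : u / L ^ 11 ≤ E - B := by linarith
  have hgap₀ : 0 < u / L ^ 11 := by positivity
  have hL22 : L ^ 11 ≤ L ^ 22 := pow_le_pow_right₀ hL (by norm_num)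
  -- Either `E ≤ 2B ≤ 4u`, or `E ≤ 2 (E - B)`.
  rcases le_or_gt E (2 * B) with hEB | hEB
  · calc E / (E - B) ^ 2 ≤ (4 * u) / (u / L ^ 11) ^ 2 := by gcongr; linarith
      _ = 4 * L ^ 22 / u := by field_simp
  · calc E / (E - B) ^ 2 ≤ 2 * (E - B) / (E - B) ^ 2 := by gcongr; linarith
      _ = 2 / (E - B) := by field_simp
      _ ≤ 2 / (u / L ^ 11) := by gcongr
      _ = 2 * L ^ 11 / u := by field_simp
      _ ≤ 4 * L ^ 22 / u := by gcongr; linarith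

lemma mul_moment_div_pow_le_rpow {x δ E B M : ℝ} {c q : ℕ} (hx : 2 ≤ x) (hδ : 0 < δ)
    (hcq : 5 * c ≤ 12 * q) (hM : M ≤ x) (hB : 0 ≤ B) (hBu : B ≤ 2 * x ^ δ)
    (hE : B + x ^ δ / Real.logb 2 x ^ 11 ≤ E)
    (hlog : (q + 1) * q ^ (2 * q) * 4 ^ q * Real.logb 2 x ^ (22 * q) ≤ x ^ (δ * c / 12)) :
    M * ((q + 1) * q ^ (2 * q) * E ^ q / (E - B) ^ (2 * q)) ≤ x ^ (1 - δ * c / 3) := by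
  set L := Real.logb 2 x
  have hx₀ : 0 < x := by linarith
  have hL : 1 ≤ L := by
    rw [Real.le_logb_iff_rpow_le one_lt_two hx₀, Real.rpow_one]; exact hx
  have hu : 0 < x ^ δ := Real.rpow_pos_of_pos hx₀ δ
  have hE₀ : 0 ≤ E := by
    have : 0 ≤ x ^ δ / L ^ 11 := by positivity
    linarith
  have hq : (5 : ℝ) * c ≤ 12 * q := by exact_mod_cast hcq
  calc M * ((q + 1) * q ^ (2 * q) * E ^ q / (E - B) ^ (2 * q))
      = M * ((q + 1) * q ^ (2 * q) * (E / (E - B) ^ 2) ^ q) := by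
        rw [div_pow, ← pow_mul, mul_div_assoc]
    _ ≤ x * ((q + 1) * q ^ (2 * q) * (4 * L ^ 22 / x ^ δ) ^ q) := by
        gcongr ?_ * (_ * ?_ ^ q)
        exact div_sq_sub_le hu hL hBu hE
    _ = (q + 1) * q ^ (2 * q) * 4 ^ q * L ^ (22 * q) * (x / (x ^ δ) ^ q) := by
        rw [div_pow, mul_pow, ← pow_mul]; ring
    _ ≤ x ^ (δ * c / 12) * (x / (x ^ δ) ^ q) := by gcongr
    _ = x ^ (δ * c / 12 + (1 - δ * q)) := by
        rw [← Real.rpow_natCast, ← Real.rpow_mul hx₀.le, Real.rpow_add hx₀, Real.rpow_sub hx₀,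
          Real.rpow_one]
    _ ≤ x ^ (1 - δ * c / 3) := Real.rpow_le_rpow_of_exponent_le (by linarith) (by
        nlinarith [mul_le_mul_of_nonneg_left hq hδ.le])

lemma eventually_mul_logb_pow_le_rpow (K : ℝ) (k : ℕ) {ε : ℝ} (hε : 0 < ε) :
    ∀ᶠ n : ℕ in atTop, K * Real.logb 2 n ^ k ≤ (n : ℝ) ^ ε := by
  have h : (fun x : ℝ => K * Real.logb 2 x ^ k) =o[atTop] fun x => x ^ ε := by
    refine ((isLittleO_log_rpow_rpow_atTop k hε).const_mul_left (K / Real.log 2 ^ k)).congr'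
      (Eventually.of_forall fun x => ?_) EventuallyEq.rfl
    simp only [Real.rpow_natCast, Real.logb, div_pow]
    ring
  filter_upwards [tendsto_natCast_atTop_atTop.eventually (h.bound one_pos)] with n hn
  rw [one_mul, Real.norm_eq_abs, Real.norm_of_nonneg (by positivity)] at hn
  exact (le_abs_self _).trans hn

open scoped Classical in
/-- Claim 5.2: for every `δ ∈ (0, 0.1)` and every sufficiently large `c`
(depending only on `δ`), for all sufficiently large `n`: if `n′ ≤ n` keys are hashed by a
`c`-wise independent family of uniform hash values into `M` bins, with
`n^δ/2 ≤ B ≤ 2 n^δ` and `n′/M ≥ B + n^δ/(log₂ n)^{11}`, then the probability that some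
bin receives at most `B` keys is at most `n^{1 - δc/3}`; i.e., with high probability in
`n`, every bin has at least `B + 1` keys hashing to it. -/
theorem stmt_11 :
    ∀ δ : ℝ, 0 < δ → δ < 0.1 →
      ∃ c₀ : ℕ, ∀ c : ℕ, c₀ ≤ c →
        ∃ N₀ : ℕ, ∀ n : ℕ, N₀ ≤ n →
          ∀ n' : ℕ, n' ≤ n →
          ∀ M B : ℕ, 0 < M → 0 < B →
            (n : ℝ) ^ δ / 2 ≤ (B : ℝ) → (B : ℝ) ≤ 2 * (n : ℝ) ^ δ →
            (B : ℝ) + (n : ℝ) ^ δ / (Real.logb 2 n) ^ 11 ≤ (n' : ℝ) / (M : ℝ) →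
            ∀ (Ω : Type) (_ : MeasurableSpace Ω) (μ : Measure Ω),
              IsProbabilityMeasure μ →
            ∀ h : Fin n' → Ω → Fin M,
              (∀ i, Measurable (h i)) →
              (∀ i k, μ {ω | h i ω = k} = (M : ENNReal)⁻¹) →
              CWiseIndep c h μ →
              μ {ω | ∃ k : Fin M,
                  ((Finset.univ.filter fun i : Fin n' => h i ω = k).card : ℝ) ≤ (B : ℝ)} ≤
                ENNReal.ofReal ((n : ℝ) ^ (1 - δ * c / 3)) := by
  intro δ hδ _
  refine ⟨6, fun c hc => ?_⟩
  set q := c / 2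
  obtain ⟨N₀, hN₀⟩ := eventually_atTop.mp ((eventually_ge_atTop 2).and
    (eventually_mul_logb_pow_le_rpow ((q + 1) * q ^ (2 * q) * 4 ^ q) (22 * q)
      (by positivity : 0 < δ * c / 12)))
  refine ⟨N₀, fun n hn n' hn' M B hM hB _ hBu hE Ω _ μ _ h hmeas hunif hindep => ?_⟩
  obtain ⟨hn₂, hlog⟩ := hN₀ n hn
  have hgap : 0 < (n : ℝ) ^ δ / Real.logb 2 n ^ 11 := by
    have : 0 < Real.logb 2 n := Real.logb_pos one_lt_two (by exact_mod_cast hn₂)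
    positivity
  have hBE : (B : ℝ) < n' / M := by linarith
  have hload : 1 ≤ (n' : ℝ) / M := le_trans (by exact_mod_cast hB) hBE.le
  have hMn : (M : ℝ) ≤ n := calc
    (M : ℝ) ≤ n' := (one_le_div₀ (Nat.cast_pos.mpr hM)).mp hload
    _ ≤ n := by exact_mod_cast hn'
  calc μ {ω | ∃ k : Fin M, ((#{i | h i ω = k} : ℕ) : ℝ) ≤ B}
      ≤ ∑ k : Fin M, μ {ω | ((#{i | h i ω = k} : ℕ) : ℝ) ≤ B} := by
        rw [Set.ofPred_exists]; exact measure_iUnion_fintype_le _ _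
    _ ≤ ∑ _k : Fin M, ENNReal.ofReal ((q + 1) * q ^ (2 * q) * ((n' : ℝ) / M) ^ q
          / ((n' : ℝ) / M - B) ^ (2 * q)) :=
        sum_le_sum fun k _ => measure_card_filter_le_le hmeas (hunif · k) hindep (by omega) hload hBE
    _ = ENNReal.ofReal (M * ((q + 1) * q ^ (2 * q) * ((n' : ℝ) / M) ^ q
          / ((n' : ℝ) / M - B) ^ (2 * q))) := by
        rw [sum_const, card_univ, Fintype.card_fin, nsmul_eq_mul,
          ENNReal.ofReal_mul (by positivity), ENNReal.ofReal_natCast]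
    _ ≤ ENNReal.ofReal ((n : ℝ) ^ (1 - δ * c / 3)) :=
        ENNReal.ofReal_le_ofReal (mul_moment_div_pow_le_rpow (by exact_mod_cast hn₂) hδ
          (by omega) hMn (by positivity) hBu hE hlog)
end
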